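/- Let |ψ⟩ be a unit vector in (ℂ²)^{⊗n₁}, and define |ψ_otp⟩ = (1/2) Σ_{a,b ∈ {0,1}} ((X^a Z^b)^{⊗n₁} |ψ⟩) ⊗ |abab⟩ ∈ (ℂ²)^{⊗(n₁+4)}. Then |ψ_otp⟩ is a unit vector and for every single qubit index j ∈ [n₁+4], the reduced density matrix Tr_{\overline{j}}(|ψ_otp⟩⟨ψ_otp|) equals I/2. -/

import Mathlib

open Matrix BigOperators

/-- Pauli `X`. -/
def pauliX : Matrix (Fin 2) (Fin 2) ℂ := !![0, 1; 1, 0]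

/-- Pauli `Z`. -/
def pauliZ : Matrix (Fin 2) (Fin 2) ℂ := !![1, 0; 0, -1]

/-- The one-time-pad operator `X^a Z^b` on one qubit. -/
noncomputable def XZ (a b : Fin 2) : Matrix (Fin 2) (Fin 2) ℂ :=
  pauliX ^ (a : ℕ) * pauliZ ^ (b : ℕ)

/-- The key string `|abab⟩` on the 4 key qubits. -/
def keyString (a b : Fin 2) : Fin 4 → Fin 2 := ![a, b, a, b]

/-- The one-time-padded proof state
`|ψ_otp⟩ = (1/2) Σ_{a,b} ((X^a Z^b)^{⊗n₁} |ψ⟩) ⊗ |abab⟩` on `n₁ + 4` qubits, where the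
first `n₁` qubits carry the padded proof and the last 4 qubits carry the key. -/
noncomputable def psiOtp (n₁ : ℕ) (ψ : (Fin n₁ → Fin 2) → ℂ) :
    (Fin (n₁ + 4) → Fin 2) → ℂ :=
  fun v => (1/2 : ℂ) * ∑ a : Fin 2, ∑ b : Fin 2,
    (if ∀ k : Fin 4, v (Fin.natAdd n₁ k) = keyString a b k then (1 : ℂ) else 0) *
    ∑ z : Fin n₁ → Fin 2,
      (∏ i : Fin n₁, XZ a b (v (Fin.castAdd 4 i)) (z i)) * ψ z

/-- The single-qubit reduced density matrix of a pure state `φ` on qubit `j`. -/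
noncomputable def rdm1 {m : ℕ} (φ : (Fin m → Fin 2) → ℂ) (j : Fin m) :
    Matrix (Fin 2) (Fin 2) ℂ :=
  Matrix.of fun p q => ∑ z : Fin m → Fin 2,
    if z j = p then φ z * star (φ (Function.update z j q)) else 0

/-!
Write a basis vector of the `n₁ + 4` qubits as `Fin.append w k`. The amplitude of `ψ_otp` at it
vanishes unless the key part `k` is a key string `abab`, and is then `½ ((X^a Z^b)^{⊗n₁} ψ)(w)`;
as distinct keys give distinct strings, every sum quadratic in `ψ_otp` splits into the four key
sectors. Since `X^a Z^b` is a bit shift followed by a phase, `(X^a Z^b)^{⊗n₁}` preserves the norm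
and conjugates each one-qubit reduced density matrix by `X^a Z^b`, so on a proof qubit the reduced
state of `ψ_otp` is the Pauli twirl of that of `ψ`, i.e. `I/2`. On a key qubit the off-diagonal
entries vanish because changing one bit of `abab` never gives a key string, while each diagonal
entry collects weight `1/4` from exactly two of the four keys.
-/

lemma XZ_apply_eq_zero {a b p x : Fin 2} (hx : x ≠ p + a) : XZ a b p x = 0 := by
  fin_cases a <;> fin_cases b <;> fin_cases p <;> fin_cases x <;>
    simp_all [XZ, pauliX, pauliZ, Matrix.mul_apply, Fin.sum_univ_two]

lemma norm_XZ_apply_add (a b p : Fin 2) : ‖XZ a b p (p + a)‖ = 1 := by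
  fin_cases a <;> fin_cases b <;> fin_cases p <;>
    simp [XZ, pauliX, pauliZ, Matrix.mul_apply, Fin.sum_univ_two]

lemma XZ_mul_mul_conjTranspose_apply (a b : Fin 2) (ρ : Matrix (Fin 2) (Fin 2) ℂ) (p q : Fin 2) :
    (XZ a b * ρ * (XZ a b)ᴴ) p q
      = XZ a b p (p + a) * ρ (p + a) (q + a) * star (XZ a b q (q + a)) := by
  simp only [Matrix.mul_apply, Matrix.conjTranspose_apply, Fin.sum_univ_two]
  fin_cases a <;> fin_cases b <;> fin_cases p <;> fin_cases q <;>
    simp [XZ, pauliX, pauliZ, Matrix.mul_apply, Fin.sum_univ_two]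

lemma pauli_twirl (ρ : Matrix (Fin 2) (Fin 2) ℂ) :
    (1 / 4 : ℂ) • ∑ a, ∑ b, XZ a b * ρ * (XZ a b)ᴴ = (ρ.trace / 2) • 1 := by
  ext p q
  simp only [Matrix.smul_apply, Matrix.sum_apply, XZ_mul_mul_conjTranspose_apply]
  fin_cases p <;> fin_cases q <;>
    simp [XZ, pauliX, pauliZ, Matrix.mul_apply, Matrix.one_apply, Fin.sum_univ_two,
      Matrix.trace] <;> ring

section ReducedDensityMatrix

variable {m : ℕ}

lemma rdm1_apply (φ : (Fin m → Fin 2) → ℂ) (j : Fin m) (p q : Fin 2) :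
    rdm1 φ j p q = ∑ z, if z j = p then φ z * star (φ (Function.update z j q)) else 0 :=
  rfl

lemma sum_mul_star_eq (φ : (Fin m → Fin 2) → ℂ) :
    ∑ z, φ z * star (φ z) = ((∑ z, ‖φ z‖ ^ 2 : ℝ) : ℂ) := by
  push_cast
  exact Finset.sum_congr rfl fun z _ => Complex.mul_conj' (φ z)

lemma trace_rdm1 (φ : (Fin m → Fin 2) → ℂ) (j : Fin m) :
    (rdm1 φ j).trace = ∑ z, φ z * star (φ z) := by
  simp only [Matrix.trace, Matrix.diag, rdm1_apply]
  rw [Finset.sum_comm]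
  refine Finset.sum_congr rfl fun z _ => ?_
  simp

lemma rdm1_comp_add_apply (φ : (Fin m → Fin 2) → ℂ) (c : Fin m → Fin 2) (j : Fin m) (p q : Fin 2) :
    rdm1 (fun z => φ (z + c)) j p q = rdm1 φ j (p + c j) (q + c j) := by
  refine Fintype.sum_equiv (Equiv.addRight c) _ _ fun z => ?_
  simp only [Equiv.coe_addRight, Pi.add_apply, add_left_inj]
  rw [Function.update_add, Function.update_eq_self]

lemma rdm1_prod_mul_apply (φ : (Fin m → Fin 2) → ℂ) (d : Fin m → Fin 2 → ℂ)
    (hd : ∀ i x, ‖d i x‖ = 1) (j : Fin m) (p q : Fin 2) :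
    rdm1 (fun z => (∏ i, d i (z i)) * φ z) j p q = d j p * star (d j q) * rdm1 φ j p q := by
  rw [rdm1_apply, rdm1_apply, Finset.mul_sum]
  refine Finset.sum_congr rfl fun z _ => ?_
  split_ifs with hz
  · have hphase : (∏ i, d i (z i)) * star (∏ i, d i (Function.update z j q i))
        = d j p * star (d j q) := by
      rw [star_prod, ← Finset.prod_mul_distrib, Fintype.prod_eq_single j fun i hi => ?_]
      · rw [Function.update_self, hz]
      · rw [Function.update_of_ne hi, Complex.star_def, Complex.mul_conj', hd]
        norm_num
    rw [star_mul', ← hphase]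
    ring
  · rw [mul_zero]

end ReducedDensityMatrix

section PauliPad

variable {n : ℕ}

/-- The padded proof `(X^a Z^b)^{⊗n} |ψ⟩`. -/
noncomputable def pauliPad (a b : Fin 2) (ψ : (Fin n → Fin 2) → ℂ) : (Fin n → Fin 2) → ℂ :=
  fun w => ∑ z, (∏ i, XZ a b (w i) (z i)) * ψ z

lemma pauliPad_apply (a b : Fin 2) (ψ : (Fin n → Fin 2) → ℂ) (w : Fin n → Fin 2) :
    pauliPad a b ψ w = (∏ i, XZ a b (w i) (w i + a)) * ψ (w + fun _ => a) := by
  rw [pauliPad, Fintype.sum_eq_single (w + fun _ => a) fun z hz => ?_]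
  · simp only [Pi.add_apply]
  obtain ⟨i, hi⟩ := Function.ne_iff.mp hz
  rw [Finset.prod_eq_zero (Finset.mem_univ i) (XZ_apply_eq_zero hi), zero_mul]

lemma sum_norm_sq_pauliPad (a b : Fin 2) (ψ : (Fin n → Fin 2) → ℂ) :
    ∑ w, ‖pauliPad a b ψ w‖ ^ 2 = ∑ w, ‖ψ w‖ ^ 2 := by
  simp only [pauliPad_apply, norm_mul, norm_prod, norm_XZ_apply_add, Finset.prod_const_one,
    one_mul]
  exact Fintype.sum_equiv (Equiv.addRight fun _ => a) (fun w => ‖ψ (w + fun _ => a)‖ ^ 2)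
    (fun w => ‖ψ w‖ ^ 2) fun _ => rfl

lemma sum_mul_star_pauliPad (a b : Fin 2) (ψ : (Fin n → Fin 2) → ℂ) :
    ∑ w, pauliPad a b ψ w * star (pauliPad a b ψ w) = ∑ z, ψ z * star (ψ z) := by
  rw [sum_mul_star_eq, sum_mul_star_eq, sum_norm_sq_pauliPad]

lemma rdm1_pauliPad (a b : Fin 2) (ψ : (Fin n → Fin 2) → ℂ) (j : Fin n) :
    rdm1 (pauliPad a b ψ) j = XZ a b * rdm1 ψ j * (XZ a b)ᴴ := by
  ext p q
  have hpad : pauliPad a b ψ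
      = fun w => (∏ i, XZ a b (w i) (w i + a)) * (fun z => ψ (z + fun _ => a)) w :=
    funext (pauliPad_apply a b ψ)
  rw [XZ_mul_mul_conjTranspose_apply, hpad,
    rdm1_prod_mul_apply _ (fun _ x => XZ a b x (x + a)) (fun _ => norm_XZ_apply_add a b),
    rdm1_comp_add_apply]
  ring

end PauliPad

section FinAppend

variable {α : Type*} {n k : ℕ}

lemma sum_fin_append {M : Type*} [AddCommMonoid M] [Fintype α] (f : (Fin (n + k) → α) → M) :
    ∑ v, f v = ∑ w, ∑ u, f (Fin.append w u) := by
  rw [← Fintype.sum_prod_type']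
  exact (Fintype.sum_equiv (Fin.appendEquiv n k) _ _ fun _ => rfl).symm

lemma update_append_castAdd (w : Fin n → α) (u : Fin k → α) (i : Fin n) (x : α) :
    Function.update (Fin.append w u) (Fin.castAdd k i) x
      = Fin.append (Function.update w i x) u := by
  funext y
  refine Fin.addCases (fun l => ?_) (fun r => ?_) y
  · simp [Function.update_apply]
  · simp [Function.update_apply, Fin.ext_iff]
    omega

lemma update_append_natAdd (w : Fin n → α) (u : Fin k → α) (i : Fin k) (x : α) :
    Function.update (Fin.append w u) (Fin.natAdd n i) x = Fin.append w (Function.update u i x) := by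
  funext y
  refine Fin.addCases (fun l => ?_) (fun r => ?_) y
  · simp [Function.update_apply, Fin.ext_iff]
    omega
  · simp [Function.update_apply]

end FinAppend

lemma keyString_injective : Function.Injective (Function.uncurry keyString) := by
  rintro ⟨a, b⟩ ⟨a', b'⟩ h
  have h0 := congrFun h 0
  have h1 := congrFun h 1
  simp_all [keyString]

lemma keyString_add_two (a b : Fin 2) (k : Fin 4) : keyString a b (k + 2) = keyString a b k := by
  fin_cases k <;> rfl

lemma update_keyString_notMem_range {a b q : Fin 2} {k : Fin 4} (hq : q ≠ keyString a b k) :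
    Function.update (keyString a b) k q ∉ Set.range (Function.uncurry keyString) := by
  rintro ⟨⟨a', b'⟩, h⟩
  have hk : k + 2 ≠ k := by fin_cases k <;> decide
  have h₁ := congrFun h k
  have h₂ := congrFun h (k + 2)
  simp only [Function.uncurry_apply_pair, Function.update_self,
    Function.update_of_ne hk, keyString_add_two] at h₁ h₂
  exact hq (h₁.symm.trans h₂)

lemma sum_ite_keyString_apply_eq {M : Type*} [AddCommMonoid M] (k : Fin 4) (p : Fin 2) (c : M) :
    ∑ a, ∑ b, (if keyString a b k = p then c else 0) = 2 • c := by
  fin_cases k <;> fin_cases p <;> simp [keyString, Fin.sum_univ_two, two_nsmul]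

section PsiOtp

variable {n : ℕ}

lemma psiOtp_append (ψ : (Fin n → Fin 2) → ℂ) (w : Fin n → Fin 2) (k : Fin 4 → Fin 2) :
    psiOtp n ψ (Fin.append w k)
      = 1 / 2 * ∑ c : Fin 2 × Fin 2, if k = Function.uncurry keyString c
          then pauliPad c.1 c.2 ψ w else 0 := by
  simp [psiOtp, pauliPad, Fin.append_left, Fin.append_right, funext_iff, Fintype.sum_prod_type]

lemma psiOtp_append_keyString (ψ : (Fin n → Fin 2) → ℂ) (w : Fin n → Fin 2) (a b : Fin 2) :
    psiOtp n ψ (Fin.append w (keyString a b)) = 1 / 2 * pauliPad a b ψ w := by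
  rw [psiOtp_append]
  simp_rw [← Function.uncurry_apply_pair keyString a b, keyString_injective.eq_iff]
  simp

lemma psiOtp_append_eq_zero (ψ : (Fin n → Fin 2) → ℂ) (w : Fin n → Fin 2) {k : Fin 4 → Fin 2}
    (hk : k ∉ Set.range (Function.uncurry keyString)) : psiOtp n ψ (Fin.append w k) = 0 := by
  rw [psiOtp_append, Finset.sum_eq_zero fun c _ => if_neg fun h => hk ⟨c, h.symm⟩, mul_zero]

lemma sum_eq_sum_keyString {M : Type*} [AddCommMonoid M] (f : (Fin (n + 4) → Fin 2) → M)
    (hf : ∀ w k, k ∉ Set.range (Function.uncurry keyString) → f (Fin.append w k) = 0) :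
    ∑ v, f v = ∑ a, ∑ b, ∑ w, f (Fin.append w (keyString a b)) := by
  rw [sum_fin_append, Finset.sum_comm,
    ← Fintype.sum_prod_type' (f := fun a b => ∑ w, f (Fin.append w (keyString a b)))]
  exact (Fintype.sum_of_injective _ keyString_injective _ _
    (fun k hk => Finset.sum_eq_zero fun w _ => hf w k hk) fun _ => rfl).symm

lemma sum_norm_sq_psiOtp (ψ : (Fin n → Fin 2) → ℂ) :
    ∑ v, ‖psiOtp n ψ v‖ ^ 2 = ∑ z, ‖ψ z‖ ^ 2 := by
  rw [sum_eq_sum_keyString _ fun w k hk => by simp [psiOtp_append_eq_zero ψ w hk]]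
  simp only [psiOtp_append_keyString, norm_mul, mul_pow, ← Finset.mul_sum, sum_norm_sq_pauliPad]
  simp only [one_div, norm_inv, Complex.norm_ofNat, inv_pow, Finset.sum_const, Finset.card_univ,
    Fintype.card_fin, nsmul_eq_mul, Nat.cast_ofNat]
  ring

lemma rdm1_psiOtp_castAdd (ψ : (Fin n → Fin 2) → ℂ) (i : Fin n) :
    rdm1 (psiOtp n ψ) (Fin.castAdd 4 i) = (1 / 4 : ℂ) • ∑ a, ∑ b, rdm1 (pauliPad a b ψ) i := by
  ext p q
  rw [rdm1_apply, sum_eq_sum_keyString]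
  · simp only [Fin.append_left, update_append_castAdd, psiOtp_append_keyString,
      Matrix.smul_apply, Matrix.sum_apply, rdm1_apply, Finset.mul_sum, smul_eq_mul]
    refine Finset.sum_congr rfl fun a _ => Finset.sum_congr rfl fun b _ =>
      Finset.sum_congr rfl fun w _ => ?_
    split_ifs
    · rw [star_mul']
      norm_num
      ring
    · rw [mul_zero]
  · intro w k hk
    simp [update_append_castAdd, psiOtp_append_eq_zero ψ _ hk]

lemma rdm1_psiOtp_natAdd (ψ : (Fin n → Fin 2) → ℂ) (k : Fin 4) :
    rdm1 (psiOtp n ψ) (Fin.natAdd n k) = ((∑ z, ψ z * star (ψ z)) / 2) • 1 := by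
  ext p q
  rw [rdm1_apply, sum_eq_sum_keyString]
  swap
  · intro w u hu
    simp [update_append_natAdd, psiOtp_append_eq_zero ψ _ hu]
  simp only [Fin.append_right, update_append_natAdd]
  rcases eq_or_ne p q with rfl | hpq
  · have hterm : ∀ a b w, (if keyString a b k = p then psiOtp n ψ (Fin.append w (keyString a b)) *
          star (psiOtp n ψ (Fin.append w (Function.update (keyString a b) k p))) else 0)
        = (if keyString a b k = p then 1 / 4 else 0) *
            (pauliPad a b ψ w * star (pauliPad a b ψ w)) := by
      intro a b w
      split_ifs with h
      · rw [← h, Function.update_eq_self, psiOtp_append_keyString, star_mul']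
        norm_num
        ring
      · rw [zero_mul]
    simp only [hterm, ← Finset.mul_sum, sum_mul_star_pauliPad, ← Finset.sum_mul,
      sum_ite_keyString_apply_eq, Matrix.smul_apply, Matrix.one_apply_eq, smul_eq_mul]
    ring
  · rw [Matrix.smul_apply, Matrix.one_apply_ne hpq, smul_zero]
    refine Finset.sum_eq_zero fun a _ => Finset.sum_eq_zero fun b _ =>
      Finset.sum_eq_zero fun w _ => ?_
    split_ifs with h
    · rw [psiOtp_append_eq_zero ψ w (update_keyString_notMem_range (h ▸ hpq.symm)), star_zero,
        mul_zero]
    · rfl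

end PsiOtp

/-- For a unit vector `|ψ⟩` on `n₁` qubits, the one-time-padded state
`|ψ_otp⟩` is a unit vector and every single-qubit reduced density matrix equals `I/2`. -/
theorem psiOtp_locally_maximally_mixed (n₁ : ℕ) (ψ : (Fin n₁ → Fin 2) → ℂ)
    (hψ : ∑ z : Fin n₁ → Fin 2, ‖ψ z‖ ^ 2 = 1) :
    (∑ v : Fin (n₁ + 4) → Fin 2, ‖psiOtp n₁ ψ v‖ ^ 2 = 1) ∧
    (∀ j : Fin (n₁ + 4),
        rdm1 (psiOtp n₁ ψ) j = (1/2 : ℂ) • (1 : Matrix (Fin 2) (Fin 2) ℂ)) := by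
  have hunit : ∑ z, ψ z * star (ψ z) = 1 := by rw [sum_mul_star_eq, hψ, Complex.ofReal_one]
  refine ⟨(sum_norm_sq_psiOtp ψ).trans hψ, fun j => ?_⟩
  induction j using Fin.addCases with
  | left i =>
    simp_rw [rdm1_psiOtp_castAdd, rdm1_pauliPad]
    rw [pauli_twirl, trace_rdm1, hunit]
  | right k => rw [rdm1_psiOtp_natAdd, hunit]
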